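/- arXiv:1411.0084 — 2 statements merged into one kernel-verified Lean document; each statement's English description precedes it below -/
import Mathlib

section
/- There exists a function i : ℕ × ℕ × ℕ → ℕ satisfying the polarized partition property above and additionally satisfying, for all n, all 0 < l, and all k < l, the growth estimate i(n+1,l,k) ≥ 2^{x(n,l)} + i(n,l,k), where x(n,l) = ∏_{k<l} i(n,l,k). -/
/-!
Induction on the number `m` of factors. Color each `x ∈ F m` by the set of tuples `s` of the
first `m` coordinates for which `(s, x) ∈ X₀`. There are at most `2 ^ (∏_{j<m} |F j|)` such
colors, so if `|F m| ≥ 2 ^ (∏_{j<m} |F j|) * b` then some `b` elements `A ⊆ F m` share a color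
`Y`, and the induction hypothesis applied to the 2-coloring `Y` of the first `m` factors finishes.
Sizes meeting `|F k| ≥ 2 ^ (∏_{j<k} |F j|) * i(n,l,k)` are chosen recursively in `k`.
-/

/-- The product set `∏_{k<m} F k`, encoded as the set of functions `s : ℕ → ℕ`
with `s k ∈ F k` for `k < m` and `s k = 0` for `k ≥ m`. -/
def prodSet (F : ℕ → Finset ℕ) (m : ℕ) : Set (ℕ → ℕ) :=
  {s | (∀ k, k < m → s k ∈ F k) ∧ ∀ k, m ≤ k → s k = 0}

open Finset Function

section ProdSet

variable {E F : ℕ → Finset ℕ} {m : ℕ}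

theorem prodSet_zero (F : ℕ → Finset ℕ) : prodSet F 0 = {0} := by
  ext s
  simp [prodSet, funext_iff]

theorem prodSet_mono (h : ∀ k < m, E k ⊆ F k) : prodSet E m ⊆ prodSet F m :=
  fun _ hs => ⟨fun k hk => h k hk (hs.1 k hk), hs.2⟩

theorem prodSet_update_of_le {j : ℕ} (A : Finset ℕ) (hj : m ≤ j) :
    prodSet (update F j A) m = prodSet F m := by
  ext s
  simp only [prodSet, Set.mem_ofPred_eq]
  refine and_congr_left fun _ => forall₂_congr fun k hk => ?_
  rw [update_of_ne (by omega)]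

theorem mem_prodSet_succ {s : ℕ → ℕ} :
    s ∈ prodSet F (m + 1) ↔ s m ∈ F m ∧ update s m 0 ∈ prodSet F m := by
  simp only [prodSet, Set.mem_ofPred_eq]
  constructor
  · rintro ⟨hF, h0⟩
    refine ⟨hF m m.lt_succ_self, fun k hk => ?_, fun k hk => ?_⟩
    · rw [update_of_ne (by omega)]; exact hF k (by omega)
    · rcases hk.eq_or_lt with rfl | hk
      · simp
      · rw [update_of_ne (by omega)]; exact h0 k hk
  · rintro ⟨hm, hF, h0⟩
    refine ⟨fun k hk => ?_, fun k hk => ?_⟩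
    · rcases (Nat.lt_succ_iff.mp hk).eq_or_lt with rfl | hk
      · exact hm
      · simpa [update_of_ne hk.ne] using hF k hk
    · simpa [update_of_ne (show k ≠ m by omega)] using h0 k (by omega)

open Classical in
noncomputable def prodFinset (F : ℕ → Finset ℕ) (m : ℕ) : Finset (ℕ → ℕ) :=
  (Fintype.piFinset fun k : Fin m => F k).image fun g k => if h : k < m then g ⟨k, h⟩ else 0

theorem coe_prodFinset (F : ℕ → Finset ℕ) (m : ℕ) :
    (prodFinset F m : Set (ℕ → ℕ)) = prodSet F m := by
  ext s
  simp only [prodFinset, coe_image, Set.mem_image, mem_coe, Fintype.mem_piFinset]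
  constructor
  · rintro ⟨g, hg, rfl⟩
    exact ⟨fun k hk => by simpa [hk] using hg ⟨k, hk⟩, fun k hk => by simp [hk.not_gt]⟩
  · rintro ⟨hF, h0⟩
    refine ⟨fun k => s k, fun k => hF k k.2, funext fun k => ?_⟩
    split_ifs with hk
    · rfl
    · exact (h0 k (not_lt.mp hk)).symm

open Classical in
theorem card_prodFinset_le (F : ℕ → Finset ℕ) (m : ℕ) :
    #(prodFinset F m) ≤ ∏ k ∈ range m, #(F k) :=
  card_image_le.trans_eq <| by
    rw [Fintype.card_piFinset, Fin.prod_univ_eq_prod_range (fun k => #(F k))]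

end ProdSet

theorem exists_subset_card_eq_with_common_coloring {α β : Type*} (P : Finset α) (B : Finset β)
    (c : β → α → Prop) {b : ℕ} (h : 2 ^ #P * b ≤ #B) :
    ∃ A ⊆ B, #A = b ∧ ∃ Y : Set α, ∀ x ∈ A, ∀ s ∈ P, c x s ↔ s ∈ Y := by
  classical
  obtain ⟨y, -, hy⟩ := exists_le_card_fiber_of_mul_le_card_of_maps_to
    (fun x _ => mem_powerset.mpr (filter_subset (c x) P)) ⟨∅, empty_mem_powerset P⟩
    (by rwa [card_powerset])
  obtain ⟨A, hAy, hA⟩ := exists_subset_card_eq hy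
  refine ⟨A, hAy.trans (filter_subset _ _), hA, y, fun x hx s hs => ?_⟩
  rw [← (mem_filter.mp (hAy hx)).2]
  simp [hs]

theorem exists_monochromatic_prodSet (F : ℕ → Finset ℕ) (b : ℕ → ℕ) (m : ℕ)
    (hF : ∀ k < m, 2 ^ (∏ j ∈ range k, #(F j)) * b k ≤ #(F k)) (X : Set (ℕ → ℕ)) :
    ∃ E : ℕ → Finset ℕ, (∀ k < m, E k ⊆ F k ∧ #(E k) = b k) ∧
      (prodSet E m ⊆ X ∨ prodSet E m ⊆ Xᶜ) := by
  induction m generalizing X with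
  | zero =>
    refine ⟨F, fun k hk => absurd hk k.not_lt_zero, ?_⟩
    rw [prodSet_zero, Set.singleton_subset_iff, Set.singleton_subset_iff]
    exact _root_.em _
  | succ m ih =>
    have hcard : 2 ^ #(prodFinset F m) * b m ≤ #(F m) :=
      calc 2 ^ #(prodFinset F m) * b m ≤ 2 ^ (∏ j ∈ range m, #(F j)) * b m := by
            gcongr
            · norm_num
            · exact card_prodFinset_le F m
        _ ≤ #(F m) := hF m m.lt_succ_self
    obtain ⟨A, hAF, hA, Y, hY⟩ := exists_subset_card_eq_with_common_coloring
      (prodFinset F m) (F m) (fun x s => update s m x ∈ X) hcard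
    obtain ⟨E, hE, hEY⟩ := ih (fun k hk => hF k (by omega)) Y
    have hmem : ∀ s ∈ prodSet (update E m A) (m + 1),
        update s m 0 ∈ prodSet E m ∧ (s ∈ X ↔ update s m 0 ∈ Y) := by
      intro s hs
      rw [mem_prodSet_succ, update_self, prodSet_update_of_le A le_rfl] at hs
      have hsF : update s m 0 ∈ prodFinset F m := by
        rw [← mem_coe, coe_prodFinset]
        exact prodSet_mono (fun k hk => (hE k hk).1) hs.2
      simpa [hs.2] using hY _ hs.1 _ hsF
    refine ⟨update E m A, fun k hk => ?_, ?_⟩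
    · rcases (Nat.lt_succ_iff.mp hk).eq_or_lt with rfl | hk
      · simpa using ⟨hAF, hA⟩
      · simpa [update_of_ne hk.ne] using hE k hk
    · refine hEY.imp (fun h s hs => ?_) (fun h s hs hsX => ?_)
      · exact (hmem s hs).2.mpr (h (hmem s hs).1)
      · exact h (hmem s hs).1 ((hmem s hs).2.mp hsX)

def ramseySizes (c : ℕ → ℕ) (k : ℕ) : ℕ :=
  2 ^ (∏ j : Fin k, ramseySizes c j) * c k
termination_by k
decreasing_by exact j.2

theorem ramseySizes_eq (c : ℕ → ℕ) (k : ℕ) :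
    ramseySizes c k = 2 ^ (∏ j ∈ range k, ramseySizes c j) * c k := by
  rw [ramseySizes, Fin.prod_univ_eq_prod_range (ramseySizes c)]

theorem le_ramseySizes (c : ℕ → ℕ) (k : ℕ) : c k ≤ ramseySizes c k := by
  rw [ramseySizes_eq]
  exact Nat.le_mul_of_pos_left _ (Nat.two_pow_pos _)

-- The summand `2 ^ x(n,l)` is there only for the growth estimate.
def partitionIndex : ℕ → ℕ → ℕ → ℕ
  | 0, _, _ => 1
  | n + 1, l, k =>
    ramseySizes (fun j => 2 ^ (∏ j ∈ range l, partitionIndex n l j) + partitionIndex n l j) k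

theorem partitionIndex_pos (n l k : ℕ) : 0 < partitionIndex n l k := by
  cases n with
  | zero => exact Nat.one_pos
  | succ n => rw [partitionIndex, ramseySizes_eq]; positivity

/-- Polarized Ramsey theorem for finite products of finite sets,
together with the growth estimate `i(n+1,l,k) ≥ 2^{x(n,l)} + i(n,l,k)`,
where `x(n,l) = ∏_{k<l} i(n,l,k)`. -/
theorem polarized_partition_with_growth :
    ∃ i : ℕ → ℕ → ℕ → ℕ,
      (∀ n l k, 0 < l → k < l → 0 < i n l k) ∧
      (∀ n l m, 0 < l → 0 < m → m ≤ l →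
        ∀ F : ℕ → Finset ℕ, (∀ k, k < m → (F k).card = i (n + 1) l k) →
          ∀ X₀ X₁ : Set (ℕ → ℕ), prodSet F m ⊆ X₀ ∪ X₁ →
            ∃ E : ℕ → Finset ℕ,
              (∀ k, k < m → E k ⊆ F k ∧ (E k).card = i n l k) ∧
              (prodSet E m ⊆ X₀ ∨ prodSet E m ⊆ X₁)) ∧
      (∀ n l k, 0 < l → k < l →
        i (n + 1) l k ≥ 2 ^ (∏ j ∈ Finset.range l, i n l j) + i n l k) := by
  refine ⟨partitionIndex, fun n l k _ _ => partitionIndex_pos n l k, ?_, ?_⟩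
  · intro n l m _ _ _ F hF X₀ X₁ hcover
    have hsizes : ∀ k < m, 2 ^ (∏ j ∈ range k, #(F j)) * partitionIndex n l k ≤ #(F k) := by
      intro k hk
      rw [prod_congr rfl fun j hj => hF j ((mem_range.mp hj).trans hk), hF k hk,
        partitionIndex, ramseySizes_eq]
      exact Nat.mul_le_mul_left _ (Nat.le_add_left _ _)
    obtain ⟨E, hE, hEX | hEX⟩ := exists_monochromatic_prodSet F _ m hsizes X₀
    · exact ⟨E, hE, Or.inl hEX⟩
    · refine ⟨E, hE, Or.inr fun s hs => ?_⟩
      exact (hcover (prodSet_mono (fun k hk => (hE k hk).1) hs)).resolve_left (hEX hs)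
  · intro n l k _ _
    exact le_ramseySizes (fun j => _ + partitionIndex n l j) k
end

section
/- An ultrafilter 𝒰 on ω is a P-point if and only if Player I does not have a winning strategy in the P-point game on 𝒰. -/
/-!
If `U` is not a P-point, some `f : ℕ → ℕ` has no fibre in `U` and no set of `U` on which it is
finite-to-one. Player I then wins by always forbidding the `f`-fibres Player II has already
touched: each fibre meets II's union in finitely many points, so that union is not in `U`.

If `U` is a P-point, the sets `A m = ⋂ σ p`, over the finitely many positions `p` of length
at most `m` with entries below `m`, have a pseudo-intersection `B ∈ U`. Cut `B` into finite
blocks `[u i, u (i + 1))` with `u 0 < u 1 < ⋯` chosen so that `B` lies in `A (u i)` beyond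
`u (i + 1)`. Playing every other block is then legal for II: the blocks played before block
`i + 1` end by `u i`, because block `i` is skipped, so they form a position bounded by `u i`.
The two alternating plays together cover `B` above `u 1`, so the union of one of them is in `U`.
-/

open Set Filter

def Ultrafilter.IsPPoint {α : Type*} (U : Ultrafilter α) : Prop :=
  ∀ f : α → ℕ, ∃ A ∈ U, (∀ n : ℕ, (A ∩ f ⁻¹' {n}).Finite) ∨ ∃ c, ∀ x ∈ A, f x = c

theorem Ultrafilter.IsPPoint.exists_pseudoIntersection {α : Type*} {U : Ultrafilter α}
    (hU : U.IsPPoint) {A : ℕ → Set α} (hA : ∀ n, A n ∈ U) :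
    ∃ B ∈ U, ∀ n, (B \ A n).Finite := by
  set f : α → ℕ := fun x => sInf {n | x ∉ A n}
  have hf_le : ∀ {x n}, x ∉ A n → f x ≤ n := fun h => Nat.sInf_le h
  have hf_mem : ∀ {x n}, x ∉ A n → x ∉ A (f x) := fun h => Nat.sInf_mem (s := {n | _ ∉ A n}) ⟨_, h⟩
  obtain ⟨C, hC, hfin | ⟨c, hc⟩⟩ := hU f
  · refine ⟨C, hC, fun n => ((finite_Iic n).biUnion fun j _ => hfin j).subset ?_⟩
    rintro x ⟨hxC, hxA⟩
    exact mem_biUnion (hf_le hxA) ⟨hxC, rfl⟩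
  · refine ⟨C ∩ A c, inter_mem hC (hA c), fun n => finite_empty.subset ?_⟩
    rintro x ⟨⟨hxC, hxc⟩, hxA⟩
    exact hf_mem hxA (hc x hxC ▸ hxc)

theorem StrictMono.exists_mem_Ico {u : ℕ → ℕ} (hu : StrictMono u) {x : ℕ} (hx : u 0 ≤ x) :
    ∃ n, u n ≤ x ∧ x < u (n + 1) := by
  by_contra! h
  have hle : ∀ n, u n ≤ x := fun n => Nat.rec hx (fun n ih => h n ih) n
  exact absurd (hu.id_le (x + 1)) (not_le.2 (Nat.lt_succ_of_le (hle (x + 1))))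

theorem exists_strictMono_le_apply_succ (φ : ℕ → ℕ) :
    ∃ u : ℕ → ℕ, StrictMono u ∧ ∀ i, φ (u i) ≤ u (i + 1) := by
  let u : ℕ → ℕ := fun i => Nat.rec 0 (fun _ ui => max (ui + 1) (φ ui)) i
  have hu : ∀ i, u (i + 1) = max (u i + 1) (φ (u i)) := fun _ => rfl
  exact ⟨u, strictMono_nat_of_lt_succ fun i => by rw [hu]; omega, fun i => by rw [hu]; omega⟩

namespace PPointGame

variable {α : Type*}

def IsPlay (σ : List (Finset α) → Set α) (s : ℕ → Finset α) : Prop :=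
  ∀ n, ↑(s n) ⊆ σ (List.ofFn fun k : Fin n => s k)

def IsWinningForI (U : Ultrafilter α) (σ : List (Finset α) → Set α) : Prop :=
  (∀ l, σ l ∈ U) ∧ ∀ s, IsPlay σ s → (⋃ n, ↑(s n) : Set α) ∉ U

section FibreAvoiding

variable {β : Type*} {f : α → β}

def fibreAvoiding (f : α → β) (l : List (Finset α)) : Set α :=
  {y | ∀ t ∈ l, ∀ x ∈ t, f y ≠ f x}

theorem fibreAvoiding_mem {U : Ultrafilter α} (hf : ∀ c, f ⁻¹' {c} ∉ U)
    (l : List (Finset α)) : fibreAvoiding f l ∈ U := by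
  have hcompl : (fibreAvoiding f l)ᶜ = ⋃ t ∈ {t | t ∈ l}, ⋃ x ∈ (t : Set α), f ⁻¹' {f x} := by
    ext y; simp [fibreAvoiding]
  rw [← Ultrafilter.compl_notMem_iff, hcompl,
    Ultrafilter.finite_biUnion_mem_iff l.finite_toSet]
  rintro ⟨t, -, ht⟩
  obtain ⟨x, -, hx⟩ := (Ultrafilter.finite_biUnion_mem_iff t.finite_toSet).1 ht
  exact hf _ hx

theorem IsPlay.finite_inter_fibre {s : ℕ → Finset α} (hs : IsPlay (fibreAvoiding f) s)
    (c : β) : ((⋃ n, ↑(s n)) ∩ f ⁻¹' {c}).Finite := by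
  by_cases hc : ∃ n, ∃ x ∈ s n, f x = c
  · obtain ⟨n, x, hxn, rfl⟩ := hc
    refine ((finite_Iic n).biUnion fun m _ => (s m).finite_toSet).subset ?_
    rintro y ⟨hy, hyx : f y = f x⟩
    obtain ⟨m, hym⟩ := mem_iUnion.1 hy
    refine mem_biUnion (mem_Iic.2 <| not_lt.1 fun hnm => hs m hym _ ?_ x hxn hyx) hym
    exact List.mem_ofFn.2 ⟨⟨n, hnm⟩, rfl⟩
  · push Not at hc
    refine finite_empty.subset ?_
    rintro y ⟨hy, hyc⟩
    obtain ⟨m, hym⟩ := mem_iUnion.1 hy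
    exact hc m y hym hyc

end FibreAvoiding

theorem exists_isWinningForI_of_not_isPPoint {U : Ultrafilter α} (hU : ¬U.IsPPoint) :
    ∃ σ, IsWinningForI U σ := by
  obtain ⟨f, hf⟩ := not_forall.1 hU
  have hfibre : ∀ c, f ⁻¹' {c} ∉ U := fun c hc => hf ⟨_, hc, Or.inr ⟨c, fun _ hx => hx⟩⟩
  exact ⟨fibreAvoiding f, fibreAvoiding_mem hfibre,
    fun s hs hsU => hf ⟨_, hsU, Or.inl hs.finite_inter_fibre⟩⟩

def boundedPositions (m : ℕ) : Set (List (Finset ℕ)) :=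
  {l | l.length ≤ m ∧ ∀ t ∈ l, t ⊆ Finset.range m}

theorem boundedPositions_finite (m : ℕ) : (boundedPositions m).Finite := by
  have h : {l : List (Finset.range m).powerset | l.length ≤ m}.Finite :=
    List.finite_length_le _ m
  refine (h.image (List.map Subtype.val)).subset ?_
  rintro l ⟨hl, hs⟩
  refine ⟨l.pmap (fun t ht => ⟨t, ht⟩) fun t htl => Finset.mem_powerset.2 (hs t htl), ?_, ?_⟩
  · simpa using hl
  · simp [List.map_pmap]

section Blocks

variable {B : Set ℕ} {u : ℕ → ℕ}

open Classical in
noncomputable def block (B : Set ℕ) (u : ℕ → ℕ) (i : ℕ) : Finset ℕ :=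
  {x ∈ Finset.Ico (u i) (u (i + 1)) | x ∈ B}

theorem mem_block {i x : ℕ} : x ∈ block B u i ↔ x ∈ B ∧ u i ≤ x ∧ x < u (i + 1) := by
  simp [block, and_comm]

theorem isPlay_block {σ : List (Finset ℕ) → Set ℕ} (hu : StrictMono u)
    (hB : ∀ i, ∀ x ∈ B, u (i + 1) ≤ x → ∀ p ∈ boundedPositions (u i), x ∈ σ p) (o : ℕ) :
    IsPlay σ fun k => block B u (2 * k + o + 1) := by
  intro k x hx
  obtain ⟨hxB, hux, -⟩ := mem_block.1 hx
  refine hB (2 * k + o) x hxB hux _ ⟨?_, ?_⟩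
  · rw [List.length_ofFn]
    exact (show k ≤ 2 * k + o by omega).trans (hu.id_le _)
  · intro t ht y hy
    obtain ⟨j, rfl⟩ := List.mem_ofFn.1 ht
    have hj : 2 * (j : ℕ) + o + 2 ≤ 2 * k + o := by omega
    exact Finset.mem_range.2 ((mem_block.1 hy).2.2.trans_le (hu.monotone hj))

theorem inter_Ici_subset_iUnion_block (hu : StrictMono u) :
    B ∩ Ici (u 1) ⊆ ⋃ o ∈ Iio 2, ⋃ k, (block B u (2 * k + o + 1) : Set ℕ) := by
  rintro x ⟨hxB, hx⟩
  obtain ⟨n, hn⟩ := (hu.comp (strictMono_id.add_const 1)).exists_mem_Ico (x := x) hx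
  refine mem_biUnion (Nat.mod_lt n two_pos) (mem_iUnion.2 ⟨n / 2, mem_block.2 ?_⟩)
  rw [Nat.div_add_mod]
  exact ⟨hxB, hn⟩

end Blocks

theorem exists_isPlay_iUnion_mem {U : Ultrafilter ℕ} (hU : (U : Filter ℕ) ≤ cofinite)
    (hP : U.IsPPoint) {σ : List (Finset ℕ) → Set ℕ} (hσ : ∀ l, σ l ∈ U) :
    ∃ s, IsPlay σ s ∧ (⋃ n, ↑(s n) : Set ℕ) ∈ U := by
  obtain ⟨B, hB, hBA⟩ := hP.exists_pseudoIntersection (A := fun m => ⋂ p ∈ boundedPositions m, σ p)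
    fun m => (biInter_mem (boundedPositions_finite m)).2 fun p _ => hσ p
  have htail : ∀ m, ∃ N, ∀ x ∈ B, N ≤ x → ∀ p ∈ boundedPositions m, x ∈ σ p := by
    intro m
    obtain ⟨N, hN⟩ := (hBA m).bddAbove
    refine ⟨N + 1, fun x hx hNx => mem_iInter₂.1 (by_contra fun h => ?_)⟩
    have := hN ⟨hx, h⟩
    omega
  choose φ hφ using htail
  obtain ⟨u, hu, huφ⟩ := exists_strictMono_le_apply_succ φ
  have hBu : B ∩ Ici (u 1) ∈ U :=
    inter_mem hB (hU (mem_cofinite.2 (by simp)))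
  obtain ⟨o, -, ho⟩ := (Ultrafilter.finite_biUnion_mem_iff (finite_Iio 2)).1
    (mem_of_superset hBu (inter_Ici_subset_iUnion_block hu))
  exact ⟨_, isPlay_block hu (fun i x hx hix => hφ _ x hx ((huφ i).trans hix)) o, ho⟩

end PPointGame

open PPointGame in
/-- A non-principal ultrafilter `U` on `ω` is a P-point iff Player I has no
winning strategy in the P-point game on `U`. A strategy for Player I is a map
`σ` from finite sequences of Player II's moves (finite sets) to sets in `U`;
it is winning if for every play `s : ℕ → Finset ℕ` with `s n ⊆ σ ⟨s 0, …, s (n-1)⟩`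
for all `n`, the union `⋃ n, s n` is not in `U`. -/
theorem pPoint_iff_no_winning_strategy (U : Ultrafilter ℕ)
    (hU : (U : Filter ℕ) ≤ Filter.cofinite) :
    (∀ f : ℕ → ℕ, ∃ A ∈ U,
      (∀ n : ℕ, (A ∩ f ⁻¹' {n}).Finite) ∨ ∃ c, ∀ x ∈ A, f x = c) ↔
    ¬∃ σ : List (Finset ℕ) → Set ℕ,
      (∀ l : List (Finset ℕ), σ l ∈ U) ∧
      ∀ s : ℕ → Finset ℕ,
        (∀ n : ℕ, ↑(s n) ⊆ σ (List.ofFn fun k : Fin n => s k)) →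
        (⋃ n, ↑(s n) : Set ℕ) ∉ U := by
  change U.IsPPoint ↔ ¬∃ σ, IsWinningForI U σ
  refine ⟨fun hP ⟨σ, hσ, hwin⟩ => ?_, fun h => by_contra fun hP => h ?_⟩
  · obtain ⟨s, hs, hsU⟩ := exists_isPlay_iUnion_mem hU hP hσ
    exact hwin s hs hsU
  · exact exists_isWinningForI_of_not_isPPoint hP
end
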